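/- For every n ∈ ℕ, with ω = (−1 + √−3)/2 ∈ ℂ a primitive cube root of unity, one has a_n = Σ_{k=0}^{n} C(n,k)^3 · (−ω)^{2k−n}, and the same identity holds with ω replaced by its complex conjugate ω̄. -/

import Mathlib

/-!
Surányi's identity `∑ⱼ C(p,j) C(q,j) C(p+q+j,j) = C(p+q,q)²` follows from three applications of
Vandermonde's convolution. Multiplying it by `C(n,k)` with `p = n - k`, `q = k` gives the
MacMahon-type expansion `C(n,k)³ = ∑ⱼ C(n,j) C(n-j,j) C(n+j,j) C(n-2j,k-j)`, i.e.
`∑ₖ C(n,k)³ xᵏ = ∑ⱼ C(n,j) C(n-j,j) C(n+j,j) xʲ (1+x)ⁿ⁻²ʲ`. At `x = ζ²` with `ζ² + 1 = ζ`, which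
holds for `ζ = -ω` and `ζ = -ω̄`, the `j`-th summand becomes `ζⁿ` times the `j`-th term of `aₙ`.
-/

/-- `ω = (-1 + √-3)/2`, a primitive cube root of unity. -/
noncomputable def omegaC : ℂ := (-1 + Real.sqrt 3 * Complex.I) / 2

/-- The sequence `a_n = ∑_{k=0}^n C(n,k) C(n-k,k) C(n+k,k)`. -/
def seqA (n : ℕ) : ℕ :=
  ∑ k ∈ Finset.range (n + 1), Nat.choose n k * Nat.choose (n - k) k * Nat.choose (n + k) k

open Finset

namespace Nat

theorem add_choose_eq_sum_range (m n k : ℕ) :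
    (m + n).choose k = ∑ i ∈ range (k + 1), m.choose i * n.choose (k - i) := by
  rw [add_choose_eq, Finset.Nat.sum_antidiagonal_eq_sum_range_succ_mk]

theorem sum_range_choose_mul_choose (p q : ℕ) :
    ∑ i ∈ range (q + 1), p.choose i * q.choose i = (p + q).choose q := by
  rw [add_choose_eq_sum_range]
  refine sum_congr rfl fun i hi => ?_
  rw [choose_symm (mem_range_succ_iff.mp hi)]

theorem choose_mul_choose_sub_comm (a b c : ℕ) :
    a.choose b * (a - b).choose c = a.choose c * (a - c).choose b := by
  have hb := choose_mul (n := a) (le_add_right b c)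
  have hc := choose_mul (n := a) (le_add_left c b)
  rw [add_tsub_cancel_left] at hb
  rw [add_tsub_cancel_right] at hc
  rw [← hb, ← hc, choose_symm_add]

theorem add_choose_eq_sum_choose_mul_choose {N j M : ℕ} (hj : j ≤ M) :
    (N + j).choose j = ∑ i ∈ range (M + 1), N.choose i * j.choose i := by
  rw [add_choose_eq_sum_range]
  calc ∑ i ∈ range (j + 1), N.choose i * j.choose (j - i)
      = ∑ i ∈ range (j + 1), N.choose i * j.choose i :=
        sum_congr rfl fun i hi => by rw [choose_symm (mem_range_succ_iff.mp hi)]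
    _ = _ := sum_subset (range_subset_range.mpr (by omega)) fun i _ hi => by
        rw [choose_eq_zero_of_lt (n := j) (by simpa using hi), mul_zero]

theorem sum_range_choose_mul_choose_mul_choose {p q i : ℕ} (hi : i ≤ q) :
    ∑ j ∈ range (q + 1), p.choose j * q.choose j * j.choose i
      = q.choose i * (p + q - i).choose q := by
  have h : ∀ j ∈ range (q + 1), q.choose j * j.choose i = q.choose i * (q - i).choose (q - j) := by
    intro j hj
    have hjq := mem_range_succ_iff.mp hj
    rcases lt_or_ge j i with hji | hij
    · rw [choose_eq_zero_of_lt hji, choose_eq_zero_of_lt (n := q - i) (by omega), mul_zero,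
        mul_zero]
    · rw [choose_mul hij, choose_symm_of_eq_add (n := q - i) (a := j - i) (b := q - j) (by omega)]
  rw [show p + q - i = p + (q - i) by omega, add_choose_eq_sum_range, mul_sum]
  refine sum_congr rfl fun j hj => ?_
  rw [mul_assoc, h j hj]
  ring

theorem sum_range_choose_mul_choose_mul_add_choose (p q : ℕ) :
    ∑ j ∈ range (q + 1), p.choose j * q.choose j * (p + q + j).choose j
      = (p + q).choose q ^ 2 := by
  calc ∑ j ∈ range (q + 1), p.choose j * q.choose j * (p + q + j).choose j
      = ∑ j ∈ range (q + 1), ∑ i ∈ range (q + 1),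
          (p + q).choose i * (p.choose j * q.choose j * j.choose i) := by
        refine sum_congr rfl fun j hj => ?_
        rw [add_choose_eq_sum_choose_mul_choose (mem_range_succ_iff.mp hj), mul_sum]
        exact sum_congr rfl fun i _ => by ring
    _ = ∑ i ∈ range (q + 1), (p + q).choose i * (q.choose i * (p + q - i).choose q) := by
        rw [sum_comm]
        refine sum_congr rfl fun i hi => ?_
        rw [← mul_sum, sum_range_choose_mul_choose_mul_choose (mem_range_succ_iff.mp hi)]
    _ = (p + q).choose q * ∑ i ∈ range (q + 1), p.choose i * q.choose i := by
        rw [mul_sum]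
        refine sum_congr rfl fun i _ => ?_
        rw [mul_left_comm, choose_mul_choose_sub_comm, add_tsub_cancel_right]
        ring
    _ = (p + q).choose q ^ 2 := by rw [sum_range_choose_mul_choose, sq]

theorem choose_mul_choose_mul_choose_sub {n k j : ℕ} (hjk : j ≤ k) :
    n.choose k * k.choose j * (n - k).choose j
      = n.choose j * (n - j).choose j * (n - 2 * j).choose (k - j) := by
  rw [choose_mul hjk, mul_assoc, show n - k = n - j - (k - j) by omega,
    choose_mul_choose_sub_comm, show n - j - j = n - 2 * j by omega, mul_assoc]

theorem choose_pow_three_eq_sum {n k : ℕ} (hk : k ≤ n) :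
    n.choose k ^ 3 = ∑ j ∈ range (k + 1),
      n.choose j * (n - j).choose j * (n + j).choose j * (n - 2 * j).choose (k - j) := by
  have hsq := sum_range_choose_mul_choose_mul_add_choose (n - k) k
  rw [Nat.sub_add_cancel hk] at hsq
  rw [pow_succ', ← hsq, mul_sum]
  refine sum_congr rfl fun j hj => ?_
  have := choose_mul_choose_mul_choose_sub (n := n) (mem_range_succ_iff.mp hj)
  linear_combination (n + j).choose j * this

end Nat

open Nat

theorem sum_range_choose_mul_pow_of_le {R : Type*} [CommSemiring R] (x : R) {N M : ℕ}
    (hNM : N ≤ M) : ∑ m ∈ range (M + 1), (N.choose m : R) * x ^ m = (1 + x) ^ N := by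
  rw [add_comm 1 x, add_pow]
  calc ∑ m ∈ range (M + 1), (N.choose m : R) * x ^ m
      = ∑ m ∈ range (N + 1), (N.choose m : R) * x ^ m := by
        refine (sum_subset (range_subset_range.mpr (by omega)) fun m _ hm => ?_).symm
        rw [choose_eq_zero_of_lt (n := N) (by simpa using hm), cast_zero, zero_mul]
    _ = _ := sum_congr rfl fun m _ => by ring

theorem sum_range_choose_pow_three_mul_pow {R : Type*} [CommSemiring R] (n : ℕ) (x : R) :
    ∑ k ∈ range (n + 1), (n.choose k ^ 3 : R) * x ^ k
      = ∑ j ∈ range (n + 1), (n.choose j * (n - j).choose j * (n + j).choose j : R)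
          * x ^ j * (1 + x) ^ (n - 2 * j) := by
  calc ∑ k ∈ range (n + 1), (n.choose k ^ 3 : R) * x ^ k
      = ∑ k ∈ Ico 0 (n + 1), ∑ j ∈ Ico 0 (k + 1),
          (n.choose j * (n - j).choose j * (n + j).choose j * (n - 2 * j).choose (k - j) : R)
            * x ^ k := by
        rw [← range_eq_Ico]
        refine sum_congr rfl fun k hk => ?_
        rw [← range_eq_Ico, ← sum_mul]
        exact_mod_cast congrArg (fun c : ℕ => (c : R) * x ^ k)
          (choose_pow_three_eq_sum (mem_range_succ_iff.mp hk))
    _ = ∑ j ∈ range (n + 1), ∑ k ∈ Ico j (n + 1),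
          (n.choose j * (n - j).choose j * (n + j).choose j * (n - 2 * j).choose (k - j) : R)
            * x ^ k := by
        rw [range_eq_Ico, sum_Ico_Ico_comm]
    _ = _ := by
        refine sum_congr rfl fun j hj => ?_
        have hjn := mem_range_succ_iff.mp hj
        rw [sum_Ico_eq_sum_range, show n + 1 - j = n - j + 1 by omega,
          ← sum_range_choose_mul_pow_of_le x (show n - 2 * j ≤ n - j by omega), mul_sum]
        refine sum_congr rfl fun m _ => ?_
        rw [add_tsub_cancel_left, pow_add]
        ring

theorem seqA_eq_sum_choose_pow_three_mul_zpow {K : Type*} [Field K] {ζ : K} (hζ : ζ ^ 2 + 1 = ζ)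
    (n : ℕ) : (seqA n : K) = ∑ k ∈ range (n + 1), (n.choose k : K) ^ 3 * ζ ^ ((2 * k : ℤ) - n) := by
  have hζ0 : ζ ≠ 0 := by
    rintro rfl
    norm_num at hζ
  have hzpow (k : ℕ) : ζ ^ ((2 * k : ℤ) - n) = (ζ ^ 2) ^ k / ζ ^ n := by
    rw [show (2 * k : ℤ) - n = ((2 * k : ℕ) : ℤ) - (n : ℕ) by push_cast; ring, zpow_sub₀ hζ0,
      zpow_natCast, zpow_natCast, pow_mul]
  have hterm (j : ℕ) :
      (n.choose j * (n - j).choose j * (n + j).choose j : K) * (ζ ^ 2) ^ j * (1 + ζ ^ 2) ^ (n - 2 * j)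
        = ζ ^ n * (n.choose j * (n - j).choose j * (n + j).choose j : K) := by
    rcases le_or_gt (2 * j) n with h2j | h2j
    · rw [add_comm 1, hζ, ← pow_mul, mul_assoc, ← pow_add, Nat.add_sub_cancel' h2j, mul_comm]
    · rw [choose_eq_zero_of_lt (n := n - j) (by omega)]
      simp
  calc (seqA n : K)
      = ζ ^ n * (seqA n : K) / ζ ^ n := (mul_div_cancel_left₀ _ (pow_ne_zero n hζ0)).symm
    _ = (∑ k ∈ range (n + 1), (n.choose k ^ 3 : K) * (ζ ^ 2) ^ k) / ζ ^ n := by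
        rw [sum_range_choose_pow_three_mul_pow, sum_congr rfl fun j _ => hterm j, ← mul_sum, seqA]
        push_cast
        rfl
    _ = _ := by
        rw [sum_div]
        exact sum_congr rfl fun k _ => by rw [hzpow, mul_div_assoc]

theorem omegaC_sq_add_omegaC_add_one : omegaC ^ 2 + omegaC + 1 = 0 := by
  have hs : (Real.sqrt 3 : ℂ) ^ 2 = 3 := by
    rw [← Complex.ofReal_pow, Real.sq_sqrt (by norm_num : (0:ℝ) ≤ 3)]
    norm_num
  unfold omegaC
  linear_combination (Complex.I ^ 2 / 4) * hs + (3 / 4) * Complex.I_sq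

theorem seqA_omega_representation (n : ℕ) :
    ((seqA n : ℂ)
        = ∑ k ∈ Finset.range (n + 1), (Nat.choose n k : ℂ) ^ 3
            * (-omegaC) ^ ((2 * k : ℤ) - n)) ∧
    ((seqA n : ℂ)
        = ∑ k ∈ Finset.range (n + 1), (Nat.choose n k : ℂ) ^ 3
            * (-(starRingEnd ℂ omegaC)) ^ ((2 * k : ℤ) - n)) := by
  have hω := omegaC_sq_add_omegaC_add_one
  have hω' : starRingEnd ℂ omegaC ^ 2 + starRingEnd ℂ omegaC + 1 = 0 := by
    simpa using congrArg (starRingEnd ℂ) hω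
  exact ⟨seqA_eq_sum_choose_pow_three_mul_zpow (by linear_combination hω) n,
    seqA_eq_sum_choose_pow_three_mul_zpow (by linear_combination hω') n⟩
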